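/- Let G be a graph with m edges, F a cycle of G, and f a Z2×Z2-flow on G with E(G) − E(F) ⊆ supp(f). Let C1 = E_{f=(0,1)}(G) ∪ E_{f=(1,0)}(G), C2 = E_{f=(0,1)}(G) ∪ E_{f=(1,1)}(G), and C3 = E_{f=(1,1)}(G) ∪ E_{f=(1,0)}(G). Then {C1 Δ F, C2 Δ F, C3 Δ F} (symmetric differences of edge sets) is a cycle cover of G of length exactly 2m − |E(F)| + 2|E_{f=(0,0)}(F)|: each edge of E(G) − E(F) is covered exactly twice, each edge of E(F) ∩ supp(f) exactly once, and each edge of E_{f=(0,0)}(F) exactly three times. -/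

import Mathlib

/-- A finite multigraph: loops and multiple edges are allowed.  Each edge is
assigned its (unordered) pair of endpoints. -/
structure Multigraph where
  V : Type
  E : Type
  finV : Finite V
  finE : Finite E
  ends : E → Sym2 V

attribute [instance] Multigraph.finV Multigraph.finE

namespace Multigraph

/-- A walk of length `n`: a sequence of `n+1` vertices and `n` edges, each edge
joining consecutive vertices. -/
structure Walk (G : Multigraph) (n : ℕ) where
  vtx : Fin (n + 1) → G.V
  edge : Fin n → G.E
  compat : ∀ i : Fin n, G.ends (edge i) = s(vtx i.castSucc, vtx i.succ)

variable (G : Multigraph)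

/-- The degree of a vertex (a loop counts twice). -/
noncomputable def degree (v : G.V) : ℕ :=
  Nat.card {e : G.E // v ∈ G.ends e ∧ ¬ (G.ends e).IsDiag} +
    2 * Nat.card {e : G.E // G.ends e = s(v, v)}

/-- The degree of a vertex in the subgraph with edge set `S` (a loop counts twice). -/
noncomputable def degIn (S : Set G.E) (v : G.V) : ℕ :=
  Nat.card {e : G.E // e ∈ S ∧ v ∈ G.ends e ∧ ¬ (G.ends e).IsDiag} +
    2 * Nat.card {e : G.E // e ∈ S ∧ G.ends e = s(v, v)}

/-- A cycle (identified with its edge set): every vertex has even degree. -/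
def IsCycle (S : Set G.E) : Prop := ∀ v : G.V, Even (G.degIn S v)

/-- `u` is joined to `w` by a path using only edges in `S`. -/
def Reaches (S : Set G.E) (u w : G.V) : Prop :=
  Relation.ReflTransGen (fun a b => ∃ e ∈ S, G.ends e = s(a, b)) u w

/-- A circuit (identified with its edge set): a connected `2`-regular subgraph. -/
def IsCircuit (S : Set G.E) : Prop :=
  S.Nonempty ∧
    (∀ v : G.V, (∃ e ∈ S, v ∈ G.ends e) → G.degIn S v = 2) ∧
    ∀ u w : G.V, (∃ e ∈ S, u ∈ G.ends e) → (∃ e ∈ S, w ∈ G.ends e) → G.Reaches S u w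

/-- A `ℤ₂×ℤ₂`-flow: at every vertex the values on the incident edges sum to zero
(a loop contributes its value twice, hence zero). -/
def IsFlow (f : G.E → ZMod 2 × ZMod 2) : Prop :=
  ∀ v : G.V, ∑ᶠ e ∈ {e : G.E | v ∈ G.ends e ∧ ¬ (G.ends e).IsDiag}, f e = 0

/-- The support of a flow. -/
def supp (f : G.E → ZMod 2 × ZMod 2) : Set G.E := {e | f e ≠ 0}

/-- Contraction of the edge set `C`: delete the edges of `C` and identify the
ends of each edge of `C`. -/
def contract (C : Set G.E) : Multigraph where
  V := Quot fun u w : G.V => ∃ e ∈ C, G.ends e = s(u, w)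
  E := {e : G.E // e ∉ C}
  finV := Finite.of_surjective _ (Quot.mk_surjective)
  finE := inferInstance
  ends := fun e => (G.ends e.1).map (Quot.mk _)

/-- A path: all vertices distinct (hence all edges distinct, which we also require). -/
def Walk.IsPath {n : ℕ} (W : G.Walk n) : Prop :=
  Function.Injective W.vtx ∧ Function.Injective W.edge

/-- A nontrivial path all of whose internal vertices have degree `2` in `G`. -/
def IsDeg2Path {n : ℕ} (W : G.Walk n) : Prop :=
  1 ≤ n ∧ W.IsPath G ∧ ∀ i : Fin (n + 1), 0 < i.val → i.val < n → G.degree (W.vtx i) = 2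

/-- A thread of `G`: a maximal path all of whose internal vertices have degree `2`
in `G` (maximal: its edge set is not properly contained in the edge set of
another such path). -/
def IsThread {n : ℕ} (W : G.Walk n) : Prop :=
  G.IsDeg2Path W ∧ ∀ (m : ℕ) (Q : G.Walk m), G.IsDeg2Path Q →
    Set.range W.edge ⊆ Set.range Q.edge → Set.range Q.edge = Set.range W.edge

/-- A cycle cover: a (multi)collection of cycles covering every edge. -/
def IsCycleCover (𝒞 : Multiset (Set G.E)) : Prop :=
  (∀ S ∈ 𝒞, G.IsCycle S) ∧ ∀ e : G.E, ∃ S ∈ 𝒞, e ∈ S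

/-- The length of a cycle cover: the sum of the lengths of its cycles. -/
noncomputable def coverLength (𝒞 : Multiset (Set G.E)) : ℕ :=
  (𝒞.map Set.ncard).sum

/-- The minimum length of a cycle cover of `G`. -/
noncomputable def cc : ℕ :=
  sInf {L : ℕ | ∃ 𝒞 : Multiset (Set G.E), G.IsCycleCover 𝒞 ∧ G.coverLength 𝒞 = L}

/-- `G` is bridgeless: the ends of each edge `e` are still joined after deleting `e`. -/
def Bridgeless : Prop :=
  ∀ (e : G.E) (u w : G.V), G.ends e = s(u, w) → G.Reaches {e}ᶜ u w

/-- The connected component of the subgraph with edge set `S` containing the edge `e₀`. -/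
def component (S : Set G.E) (e₀ : G.E) : Set G.E :=
  {e ∈ S | ∃ u w : G.V, u ∈ G.ends e₀ ∧ w ∈ G.ends e ∧ G.Reaches S u w}

/-- `B` is a connected component of the subgraph with edge set `S`. -/
def IsComponent (S B : Set G.E) : Prop := ∃ e₀ ∈ S, B = G.component S e₀

/-- A `k`-flow: an orientation `D` (given by the tail/head pair of each edge)
together with an integer-valued function `f` with `|f e| < k`, conserved at
every vertex. -/
def IsIntFlow (k : ℕ) (D : G.E → G.V × G.V) (f : G.E → ℤ) : Prop :=
  (∀ e : G.E, s((D e).1, (D e).2) = G.ends e) ∧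
    (∀ e : G.E, |f e| < (k : ℤ)) ∧
    ∀ v : G.V, (∑ᶠ e ∈ {e : G.E | (D e).1 = v}, f e) =
      ∑ᶠ e ∈ {e : G.E | (D e).2 = v}, f e

end Multigraph

/-! The two coordinate projections `ℤ₂ × ℤ₂ → ℤ₂` and their sum send the flow `f` to
`ℤ₂`-flows whose supports are `C₃`, `C₂` and `C₁`.  The support of a `ℤ₂`-flow is a cycle
(degrees are counted mod 2, where loops vanish), and the indicators of cycles add under `Δ`, so
each `Cᵢ Δ F` is a cycle.  Each nonzero value of `ℤ₂ × ℤ₂` lies in exactly two of the three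
pairs defining the `Cᵢ` and `0` in none of them; taking `Δ F` complements these memberships on
`F`, which gives the multiplicities `2`, `1`, `3`, and the length follows by double counting. -/

open symmDiff

lemma indicator_symmDiff_one {α : Type*} (A B : Set α) :
    (A ∆ B).indicator (1 : α → ZMod 2) = A.indicator 1 + B.indicator 1 := by
  ext x
  by_cases hA : x ∈ A <;> by_cases hB : x ∈ B <;> simp [Set.mem_symmDiff, hA, hB]; decide

lemma indicator_setOf_eq_one {α : Type*} (g : α → ZMod 2) :
    {x | g x = 1}.indicator 1 = g := by
  ext x
  simp only [Set.indicator_apply, Set.mem_ofPred_eq, Pi.one_apply]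
  generalize g x = y
  revert y; decide

open Classical in
lemma ncard_eq_sum_ite {α : Type*} [Fintype α] (S : Set α) :
    S.ncard = ∑ e, if e ∈ S then 1 else 0 := by
  simp [Set.ncard_eq_toFinset_card']

open Classical in
lemma ncard_add_ncard_add_ncard_eq {α : Type*} [Finite α] {D₁ D₂ D₃ F Z : Set α}
    (h : ∀ e, (if e ∈ D₁ then 1 else 0) + (if e ∈ D₂ then 1 else 0) + (if e ∈ D₃ then 1 else 0)
      + (if e ∈ F then 1 else 0) = 2 + 2 * if e ∈ Z then 1 else 0) :
    (D₁.ncard + D₂.ncard + D₃.ncard : ℝ) = 2 * Nat.card α - F.ncard + 2 * Z.ncard := by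
  have := Fintype.ofFinite α
  have hnat : D₁.ncard + D₂.ncard + D₃.ncard + F.ncard = 2 * Nat.card α + 2 * Z.ncard := by
    simp only [ncard_eq_sum_ite, Nat.card_eq_fintype_card, Fintype.card_eq_sum_ones,
      Finset.mul_sum, ← Finset.sum_add_distrib, h, mul_one]
  have hreal := congrArg (Nat.cast : ℕ → ℝ) hnat
  push_cast at hreal
  linarith

open Classical in
lemma ite_add_ite_add_ite_symmDiff {α : Type*} (f : α → ZMod 2 × ZMod 2) (F : Set α) (e : α) :
    (if e ∈ ({e | f e = (0, 1)} ∪ {e | f e = (1, 0)}) ∆ F then 1 else 0)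
        + (if e ∈ ({e | f e = (0, 1)} ∪ {e | f e = (1, 1)}) ∆ F then 1 else 0)
        + (if e ∈ ({e | f e = (1, 1)} ∪ {e | f e = (1, 0)}) ∆ F then 1 else 0)
      = if e ∈ F then (if f e = (0, 0) then 3 else 1) else (if f e = (0, 0) then 0 else 2) := by
  simp only [Set.mem_symmDiff, Set.mem_union, Set.mem_ofPred_eq]
  generalize f e = x
  by_cases he : e ∈ F <;> simp only [he, not_true, not_false_eq_true, and_true, and_false,
    false_or, true_and, if_true, if_false] <;> revert x <;> decide

namespace Multigraph

variable {G : Multigraph}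

def IsFlowIn {M : Type*} [AddCommMonoid M] (g : G.E → M) : Prop :=
  ∀ v : G.V, ∑ᶠ e ∈ {e : G.E | v ∈ G.ends e ∧ ¬ (G.ends e).IsDiag}, g e = 0

lemma IsFlowIn.add {M : Type*} [AddCommMonoid M] {g h : G.E → M} (hg : G.IsFlowIn g)
    (hh : G.IsFlowIn h) : G.IsFlowIn (g + h) := fun v => by
  rw [Pi.add_def, finsum_mem_add_distrib (Set.toFinite _), hg v, hh v, add_zero]

lemma IsFlowIn.map {M N : Type*} [AddCommMonoid M] [AddCommMonoid N] {g : G.E → M}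
    (hg : G.IsFlowIn g) (φ : M →+ N) : G.IsFlowIn (φ ∘ g) := fun v => by
  rw [Function.comp_def, ← φ.map_finsum_mem _ (Set.toFinite _), hg v, map_zero]

lemma natCast_degIn (S : Set G.E) (v : G.V) :
    (G.degIn S v : ZMod 2) =
      ∑ᶠ e ∈ {e : G.E | v ∈ G.ends e ∧ ¬ (G.ends e).IsDiag}, S.indicator 1 e := by
  have two_eq_zero : (2 : ZMod 2) = 0 := rfl
  simp only [degIn, Nat.cast_add, Nat.cast_mul, Nat.cast_ofNat, two_eq_zero, zero_mul, add_zero]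
  classical
  have := Fintype.ofFinite G.E
  rw [finsum_mem_eq_toFinset_sum, Nat.card_eq_fintype_card, Fintype.card_subtype,
    Finset.natCast_card_filter, Set.toFinset_ofPred, Finset.sum_filter]
  refine Finset.sum_congr rfl fun e _ => ?_
  by_cases he : e ∈ S <;> simp [he]

lemma isCycle_iff_isFlowIn_indicator (S : Set G.E) :
    G.IsCycle S ↔ G.IsFlowIn (S.indicator 1 : G.E → ZMod 2) := by
  simp only [IsCycle, IsFlowIn, ← ZMod.natCast_eq_zero_iff_even, natCast_degIn]

lemma IsCycle.symmDiff {A B : Set G.E} (hA : G.IsCycle A) (hB : G.IsCycle B) :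
    G.IsCycle (A ∆ B) := by
  rw [isCycle_iff_isFlowIn_indicator, indicator_symmDiff_one] at *
  exact hA.add hB

lemma IsFlowIn.isCycle_setOf_eq_one {g : G.E → ZMod 2} (hg : G.IsFlowIn g) :
    G.IsCycle {e | g e = 1} := by
  rwa [isCycle_iff_isFlowIn_indicator, indicator_setOf_eq_one]

lemma IsFlow.isCycle_union {f : G.E → ZMod 2 × ZMod 2} (hf : G.IsFlow f)
    {a b : ZMod 2 × ZMod 2} (φ : ZMod 2 × ZMod 2 →+ ZMod 2) (hφ : ∀ x, x = a ∨ x = b ↔ φ x = 1) :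
    G.IsCycle ({e | f e = a} ∪ {e | f e = b}) := by
  have hset : {e | f e = a} ∪ {e | f e = b} = {e | (φ ∘ f) e = 1} := Set.ext fun e => hφ (f e)
  exact hset ▸ (IsFlowIn.map hf φ).isCycle_setOf_eq_one

end Multigraph

open Multigraph symmDiff in
open Classical in
/-- Let `F` be a cycle of `G` and `f` a `ℤ₂×ℤ₂`-flow with
`E(G) − E(F) ⊆ supp f`.  With `C₁ = E_{f=(0,1)} ∪ E_{f=(1,0)}`,
`C₂ = E_{f=(0,1)} ∪ E_{f=(1,1)}`, `C₃ = E_{f=(1,1)} ∪ E_{f=(1,0)}`, the family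
`{C₁ Δ F, C₂ Δ F, C₃ Δ F}` is a cycle cover of `G` of length
`2m − |E(F)| + 2|E_{f=(0,0)}(F)|`; each edge outside `F` is covered exactly
twice, each edge of `F ∩ supp f` exactly once, and each edge of
`E_{f=(0,0)}(F)` exactly three times. -/
theorem three_symmDiff_cover (G : Multigraph) (m : ℕ) (hm : m = Nat.card G.E)
    (F : Set G.E) (hF : G.IsCycle F)
    (f : G.E → ZMod 2 × ZMod 2) (hf : G.IsFlow f)
    (hsupp : ∀ e : G.E, e ∉ F → f e ≠ (0, 0))
    (C₁ C₂ C₃ D₁ D₂ D₃ : Set G.E)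
    (hC₁ : C₁ = {e : G.E | f e = (0, 1)} ∪ {e : G.E | f e = (1, 0)})
    (hC₂ : C₂ = {e : G.E | f e = (0, 1)} ∪ {e : G.E | f e = (1, 1)})
    (hC₃ : C₃ = {e : G.E | f e = (1, 1)} ∪ {e : G.E | f e = (1, 0)})
    (hD₁ : D₁ = C₁ ∆ F) (hD₂ : D₂ = C₂ ∆ F) (hD₃ : D₃ = C₃ ∆ F) :
    G.IsCycle D₁ ∧ G.IsCycle D₂ ∧ G.IsCycle D₃ ∧
    (∀ e : G.E, e ∈ D₁ ∪ D₂ ∪ D₃) ∧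
    ((D₁.ncard : ℝ) + (D₂.ncard : ℝ) + (D₃.ncard : ℝ) =
      2 * (m : ℝ) - (F.ncard : ℝ) + 2 * ({e ∈ F | f e = (0, 0)}.ncard : ℝ)) ∧
    (∀ e : G.E, e ∉ F →
      (if e ∈ D₁ then 1 else 0) + (if e ∈ D₂ then 1 else 0)
        + (if e ∈ D₃ then 1 else 0) = 2) ∧
    (∀ e ∈ F, f e ≠ (0, 0) →
      (if e ∈ D₁ then 1 else 0) + (if e ∈ D₂ then 1 else 0)
        + (if e ∈ D₃ then 1 else 0) = 1) ∧
    (∀ e ∈ F, f e = (0, 0) →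
      (if e ∈ D₁ then 1 else 0) + (if e ∈ D₂ then 1 else 0)
        + (if e ∈ D₃ then 1 else 0) = 3) := by
  subst hm hD₁ hD₂ hD₃ hC₁ hC₂ hC₃
  have hmult := ite_add_ite_add_ite_symmDiff f F
  refine ⟨(hf.isCycle_union (AddMonoidHom.fst _ _ + AddMonoidHom.snd _ _) (by decide)).symmDiff hF,
    (hf.isCycle_union (AddMonoidHom.snd _ _) (by decide)).symmDiff hF,
    (hf.isCycle_union (AddMonoidHom.fst _ _) (by decide)).symmDiff hF, ?_, ?_,
    fun e he => by rw [hmult, if_neg he, if_neg (hsupp e he)],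
    fun e he h0 => by rw [hmult, if_pos he, if_neg h0],
    fun e he h0 => by rw [hmult, if_pos he, if_pos h0]⟩
  · intro e
    by_contra hnot
    simp only [Set.mem_union, not_or] at hnot
    have hcount := hmult e
    rw [if_neg hnot.1.1, if_neg hnot.1.2, if_neg hnot.2] at hcount
    by_cases he : e ∈ F
    · rw [if_pos he] at hcount
      split_ifs at hcount <;> omega
    · rw [if_neg he, if_neg (hsupp e he)] at hcount
      omega
  · refine ncard_add_ncard_add_ncard_eq fun e => ?_
    rw [hmult]
    by_cases he : e ∈ F
    · by_cases h0 : f e = (0, 0) <;> simp [he, h0]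
    · simp [he, hsupp e he]
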